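/- Let n be a positive integer, ζ_n a primitive n-th root of unity in ℂ, and k a positive integer. Then for every complex number X, Σ_{r=0}^{n-1} z̄_n({k}^r; ζ_n) · X^r = (1/n^k) · Π_{j=1}^{n-1} ( (1-ζ_n^j)^k + ζ_n^{(k-1)j} · X ), where z̄_n({k}^0; ζ_n) = 1 by convention. -/

import Mathlib

open Finset

/-- The set of tuples `(m_1,...,m_r)` with `n > m_1 > m_2 > ... > m_r > 0`. -/
def msets (n r : ℕ) : Finset (Fin r → Fin n) :=
  Finset.univ.filter fun m =>
    (∀ i j : Fin r, i < j → m j < m i) ∧ ∀ i, 0 < (m i : ℕ)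

/-- The set of tuples `(m_1,...,m_r)` with `n > m_1 ≥ m_2 ≥ ... ≥ m_r > 0`. -/
def msetsStar (n r : ℕ) : Finset (Fin r → Fin n) :=
  Finset.univ.filter fun m =>
    (∀ i j : Fin r, i ≤ j → m j ≤ m i) ∧ ∀ i, 0 < (m i : ℕ)

/-- The finite multiple harmonic q-series
`z_n(k_1,…,k_r; q) = Σ_{n > m_1 > … > m_r > 0} Π_i q^{(k_i-1)m_i}/[m_i]_q^{k_i}`,
where `[m]_q = (1-q^m)/(1-q)`. -/
noncomputable def z (n : ℕ) {r : ℕ} (k : Fin r → ℕ) (q : ℂ) : ℂ :=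
  ∑ m ∈ msets n r,
    ∏ i, q ^ ((k i - 1) * (m i : ℕ)) / ((1 - q ^ (m i : ℕ)) / (1 - q)) ^ (k i)

/-- The star version `z*_n(k; q)`, summed over `n > m_1 ≥ … ≥ m_r > 0`. -/
noncomputable def zstar (n : ℕ) {r : ℕ} (k : Fin r → ℕ) (q : ℂ) : ℂ :=
  ∑ m ∈ msetsStar n r,
    ∏ i, q ^ ((k i - 1) * (m i : ℕ)) / ((1 - q ^ (m i : ℕ)) / (1 - q)) ^ (k i)

/-- The modified value `z̄_n(k;q) = (1-q)^{-wt(k)} z_n(k;q)`. -/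
noncomputable def zbar (n : ℕ) {r : ℕ} (k : Fin r → ℕ) (q : ℂ) : ℂ :=
  (1 - q)⁻¹ ^ (∑ i, k i) * z n k q

/-- The modified star value `z̄*_n(k;q) = (1-q)^{-wt(k)} z*_n(k;q)`. -/
noncomputable def zstarbar (n : ℕ) {r : ℕ} (k : Fin r → ℕ) (q : ℂ) : ℂ :=
  (1 - q)⁻¹ ^ (∑ i, k i) * zstar n k q

/-- `I(k,r,s)`: the set of indices (tuples of positive integers) of weight `k`,
depth `r` and height `s`. -/
def indexSet3 (k r s : ℕ) : Finset (Fin r → ℕ) :=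
  (Finset.Nat.antidiagonalTuple r k).filter fun a =>
    (∀ i, 1 ≤ a i) ∧ (Finset.univ.filter fun i => 2 ≤ a i).card = s

/-- `I(k,r)`: the set of indices of weight `k` and depth `r`. -/
def indexSet2 (k r : ℕ) : Finset (Fin r → ℕ) :=
  (Finset.Nat.antidiagonalTuple r k).filter fun a => ∀ i, 1 ≤ a i

/-- The one-variable finite q-multiple polylogarithm
`L_{k_1,…,k_r}^{(n)}(t;q) = Σ_{n > m_1 > … > m_r > 0} t^{m_1} / Π_i (1-q^{m_i})^{k_i}`,
with `L_∅(t) = 1`. -/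
noncomputable def Lpoly (n : ℕ) {r : ℕ} (k : Fin r → ℕ) (q t : ℂ) : ℂ :=
  ∑ m ∈ msets n r,
    ∏ i : Fin r, (if i.val = 0 then t ^ (m i : ℕ) else 1) / (1 - q ^ (m i : ℕ)) ^ (k i)

/-- The star version `L*_{k_1,…,k_r}^{(n)}(t;q)`, summed over `n > m_1 ≥ … ≥ m_r > 0`. -/
noncomputable def LpolyStar (n : ℕ) {r : ℕ} (k : Fin r → ℕ) (q t : ℂ) : ℂ :=
  ∑ m ∈ msetsStar n r,
    ∏ i : Fin r, (if i.val = 0 then t ^ (m i : ℕ) else 1) / (1 - q ^ (m i : ℕ)) ^ (k i)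

/-! The coefficient of `X ^ r` is the `r`-th elementary symmetric function of the numbers
`a j = ζ ^ ((k - 1) * j) / (1 - ζ ^ j) ^ k`, `0 < j < n`, so the generating polynomial is
`∏ j, (1 + a j * X)`; clearing the denominators costs `(∏ j, (1 - ζ ^ j)) ^ k = n ^ k`. -/

theorem IsPrimitiveRoot.prod_Ico_one_sub_pow {R : Type*} [CommRing R] [IsDomain R] {n : ℕ}
    {ζ : R} (hζ : IsPrimitiveRoot ζ n) (hn : 0 < n) :
    ∏ j ∈ Ico 1 n, (1 - ζ ^ j) = n := by
  obtain ⟨n, rfl⟩ := Nat.exists_eq_add_one_of_ne_zero hn.ne'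
  rw [prod_Ico_eq_prod_range, Nat.add_sub_cancel, Nat.cast_succ]
  simpa only [add_comm 1] using hζ.prod_one_sub_pow_eq_order

theorem mem_msets {n r : ℕ} {m : Fin r → Fin n} :
    m ∈ msets n r ↔ StrictAnti m ∧ ∀ i, 0 < (m i : ℕ) := by
  simp [msets, StrictAnti]

theorem strictAnti_val_of_mem_msets {n r : ℕ} {m : Fin r → Fin n} (hm : m ∈ msets n r) :
    StrictAnti fun i => (m i : ℕ) :=
  Fin.val_strictMono.comp_strictAnti (mem_msets.mp hm).1

theorem injOn_image_msets (n r : ℕ) :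
    Set.InjOn (fun m : Fin r → Fin n => univ.image fun i => (m i : ℕ)) (msets n r) := by
  intro m₁ h₁ m₂ h₂ himage
  have hrange : Set.range (fun i => (m₁ i : ℕ)) = Set.range fun i => (m₂ i : ℕ) := by
    simpa [Set.image_univ] using congrArg (fun s : Finset ℕ => (s : Set ℕ)) himage
  rw [(strictAnti_val_of_mem_msets h₁).range_inj (strictAnti_val_of_mem_msets h₂)] at hrange
  exact funext fun i => Fin.ext (congrFun hrange i)

theorem image_msets_eq_powersetCard (n r : ℕ) :
    (msets n r).image (fun m => univ.image fun i => (m i : ℕ)) = (Ico 1 n).powersetCard r := by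
  ext s
  simp only [mem_image, mem_powersetCard]
  constructor
  · rintro ⟨m, hm, rfl⟩
    refine ⟨fun j hj => ?_, ?_⟩
    · obtain ⟨i, -, rfl⟩ := mem_image.mp hj
      exact mem_Ico.mpr ⟨(mem_msets.mp hm).2 i, (m i).isLt⟩
    · rw [card_image_of_injective _ (strictAnti_val_of_mem_msets hm).injective, card_univ,
        Fintype.card_fin]
  · rintro ⟨hsub, hcard⟩
    have hmem i : s.orderEmbOfFin hcard i ∈ Ico 1 n := hsub (s.orderEmbOfFin_mem hcard i)
    refine ⟨fun i => ⟨s.orderEmbOfFin hcard i.rev, (mem_Ico.mp (hmem _)).2⟩, ?_, ?_⟩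
    · refine mem_msets.mpr ⟨fun i j hij => ?_, fun i => (mem_Ico.mp (hmem _)).1⟩
      exact Fin.mk_lt_mk.mpr ((s.orderEmbOfFin hcard).strictMono (Fin.rev_lt_rev.mpr hij))
    · apply coe_injective
      simp only [coe_image, coe_univ, Set.image_univ]
      exact (Fin.rev_surjective.range_comp _).trans (range_orderEmbOfFin s hcard)

theorem sum_msets_prod_eq_sum_powersetCard {R : Type*} [CommSemiring R] (n r : ℕ)
    (f : ℕ → R) :
    ∑ m ∈ msets n r, ∏ i, f (m i : ℕ) =
      ∑ s ∈ (Ico 1 n).powersetCard r, ∏ j ∈ s, f j := by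
  rw [← image_msets_eq_powersetCard, sum_image (injOn_image_msets n r)]
  exact sum_congr rfl fun m hm =>
    (prod_image fun i _ j _ h => (strictAnti_val_of_mem_msets hm).injective h).symm

theorem zbar_const_eq_sum {q : ℂ} (hq : q ≠ 1) (n r k : ℕ) :
    zbar n (fun _ : Fin r => k) q =
      ∑ m ∈ msets n r, ∏ i, q ^ ((k - 1) * (m i : ℕ)) / (1 - q ^ (m i : ℕ)) ^ k := by
  have : (1 : ℂ) - q ≠ 0 := sub_ne_zero.mpr hq.symm
  rw [zbar, z, mul_sum]
  refine sum_congr rfl fun m _ => ?_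
  simp only [div_pow, div_div_eq_mul_div, prod_div_distrib, prod_mul_distrib, prod_const,
    card_univ, Fintype.card_fin, sum_const, smul_eq_mul]
  rw [← pow_mul, mul_comm r k, inv_pow]
  field_simp

theorem sum_zbar_const_mul_pow {n : ℕ} (hn : 0 < n) {q : ℂ} (hq : q ≠ 1) (k : ℕ) (X : ℂ) :
    ∑ r ∈ range n, zbar n (fun _ : Fin r => k) q * X ^ r =
      ∏ j ∈ Ico 1 n, (1 + q ^ ((k - 1) * j) / (1 - q ^ j) ^ k * X) := by
  rw [prod_one_add, sum_powerset, Nat.card_Ico, Nat.sub_add_cancel hn]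
  refine sum_congr rfl fun r _ => ?_
  rw [zbar_const_eq_sum hq, sum_msets_prod_eq_sum_powersetCard n r
    (fun j => q ^ ((k - 1) * j) / (1 - q ^ j) ^ k), sum_mul]
  refine sum_congr rfl fun s hs => ?_
  rw [prod_mul_distrib, prod_const, (mem_powersetCard.mp hs).2]

theorem zbar_kkk_generating_function_general (n : ℕ) (hn : 0 < n) (ζ : ℂ)
    (hζ : IsPrimitiveRoot ζ n) (k : ℕ) (X : ℂ) :
    ∑ r ∈ Finset.range n, zbar n (fun _ : Fin r => k) ζ * X ^ r =
      (1 / (n : ℂ) ^ k) *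
        ∏ j ∈ Finset.Ico 1 n, ((1 - ζ ^ j) ^ k + ζ ^ ((k - 1) * j) * X) := by
  obtain rfl | hn1 := (Nat.succ_le_of_lt hn).eq_or_lt
  · simp [zbar, z, msets]
  rw [sum_zbar_const_mul_pow hn (hζ.ne_one hn1), ← hζ.prod_Ico_one_sub_pow hn, ← prod_pow,
    one_div, ← prod_inv_distrib, ← prod_mul_distrib]
  refine prod_congr rfl fun j hj => ?_
  obtain ⟨hj1, hjn⟩ := mem_Ico.mp hj
  have : (1 - ζ ^ j) ^ k ≠ 0 := pow_ne_zero _ <| sub_ne_zero.mpr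
    (hζ.pow_ne_one_of_pos_of_lt (Nat.one_le_iff_ne_zero.mp hj1) hjn).symm
  field_simp

/-- `Σ_{r=0}^{n-1} z̄_n({k}^r; ζ_n) X^r
  = (1/n^k)·Π_{j=1}^{n-1} ((1-ζ_n^j)^k + ζ_n^{(k-1)j} X)`. -/
theorem zbar_kkk_generating_function (n : ℕ) (hn : 0 < n) (ζ : ℂ)
    (hζ : IsPrimitiveRoot ζ n) (k : ℕ) (hk : 1 ≤ k) (X : ℂ) :
    ∑ r ∈ Finset.range n, zbar n (fun _ : Fin r => k) ζ * X ^ r =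
      (1 / (n : ℂ) ^ k) *
        ∏ j ∈ Finset.Ico 1 n, ((1 - ζ ^ j) ^ k + ζ ^ ((k - 1) * j) * X) :=
  zbar_kkk_generating_function_general n hn ζ hζ k X
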